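/- Let A be a subring of a commutative ring B, and let J := {a ∈ A : a·b ∈ A for all b ∈ B} be the conductor of A in B. Let I be a radical ideal of A with I ⊆ J. Then the ideal I·B of B generated by I is contained in A, and its radical as an ideal of A equals I; that is, {a ∈ A : a^n ∈ I·B for some positive integer n} = I. -/

import Mathlib

/-!
Since `I·B ⊆ J ⊆ A`, a product `m * n` with `m ∈ I·B` and `n ∈ J` is an `A`-combination of
elements of `I`, hence lies in `I`. So `aⁿ ∈ I·B` gives `a²ⁿ = aⁿ * aⁿ ∈ I`, and `a ∈ I` as `I` is
radical.
-/

/-- The conductor of a subring `A` of a commutative ring `B`: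
`J = {a ∈ A : a·b ∈ A for all b ∈ B}`, realized as the ideal `{b : B | ∀ x, b * x ∈ A}`
of `B` (note every such `b` satisfies `b = b * 1 ∈ A`). -/
def conductorIdeal {B : Type*} [CommRing B] (A : Subring B) : Ideal B where
  carrier := {b : B | ∀ x : B, b * x ∈ A}
  zero_mem' := fun x => by simpa using A.zero_mem
  add_mem' := fun {a b} ha hb x => by
    simpa [add_mul] using A.add_mem (ha x) (hb x)
  smul_mem' := fun c b hb => by
    intro x
    rw [smul_eq_mul, show c * b * x = b * (c * x) by ring]
    exact hb (c * x)

section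

variable {B : Type*} [CommRing B] {A : Subring B}

lemma mem_of_mem_conductorIdeal {b : B} (hb : b ∈ conductorIdeal A) : b ∈ A := by
  simpa using hb 1

lemma exists_mem_eq_mul_of_mem_map_of_mem_conductorIdeal {K : Ideal A} {m : B}
    (hm : m ∈ K.map A.subtype) : ∀ n ∈ conductorIdeal A, ∃ y ∈ K, (y : B) = m * n := by
  induction hm using Submodule.span_induction with
  | mem z hz =>
    intro n hn
    obtain ⟨x, hxK, rfl⟩ := hz
    exact ⟨x * ⟨n, mem_of_mem_conductorIdeal hn⟩, K.mul_mem_right _ hxK, rfl⟩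
  | zero => exact fun _ _ ↦ ⟨0, K.zero_mem, by simp⟩
  | add u v _ _ ihu ihv =>
    intro n hn
    obtain ⟨y, hyK, hy⟩ := ihu n hn
    obtain ⟨z, hzK, hz⟩ := ihv n hn
    exact ⟨y + z, K.add_mem hyK hzK, by push_cast; rw [hy, hz, add_mul]⟩
  | smul b u _ ihu =>
    intro n hn
    -- `(b * u) * n = u * (b * n)`, and `b * n` is again in the conductor
    obtain ⟨y, hyK, hy⟩ := ihu (b * n) ((conductorIdeal A).mul_mem_left b hn)
    exact ⟨y, hyK, by rw [hy, smul_eq_mul]; ring⟩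

end

/-- Let `A` be a subring of a commutative ring `B` and `J` the conductor of `A` in `B`.
Let `I` be a radical ideal of `A` with `I ⊆ J`.  Then the ideal `I·B` of `B` generated
by `I` is contained in `A`, and its radical as an ideal of `A` equals `I`:
`{a ∈ A : a ^ n ∈ I·B for some positive integer n} = I`. -/
theorem radical_of_extension_eq_self {B : Type*} [CommRing B] (A : Subring B)
    (I : Ideal A)
    (hIrad : ∀ (a : A) (n : ℕ), 0 < n → a ^ n ∈ I → a ∈ I)
    (hIJ : ∀ a ∈ I, (a : B) ∈ conductorIdeal A) :
    ((Ideal.map A.subtype I : Ideal B) : Set B) ⊆ (A : Set B) ∧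
    {a : A | ∃ n : ℕ, 0 < n ∧ (a : B) ^ n ∈ Ideal.map A.subtype I} = (I : Set A) := by
  have hmap : I.map A.subtype ≤ conductorIdeal A := Ideal.map_le_iff_le_comap.2 hIJ
  refine ⟨fun b hb ↦ mem_of_mem_conductorIdeal (hmap hb), Set.ext fun a ↦ ⟨?_, ?_⟩⟩
  · rintro ⟨n, hn, hpow⟩
    obtain ⟨y, hyI, hy⟩ :=
      exists_mem_eq_mul_of_mem_map_of_mem_conductorIdeal hpow _ (hmap hpow)
    have hya : y = a ^ (n + n) := Subtype.ext (by rw [hy]; push_cast; ring)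
    exact hIrad a (n + n) (by omega) (hya ▸ hyI)
  · exact fun ha ↦ ⟨1, one_pos, by simpa using Ideal.mem_map_of_mem A.subtype ha⟩
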